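/- Let (A, B, C) be a positive solution of the backward normalized Ricci flow ODE system (⋆⋆) on an interval I, and define b = B/A and c = C/A on I. Then b and c satisfy db/dt = 2A² b(1+b)(b−c−1) and dc/dt = −2A² c(1+c)(b−c+1) on I. -/

import Mathlib

open Real Filter Set Topology

/-- Right-hand side of the backward normalized Ricci flow ODE (⋆⋆) for `A`. -/
noncomputable def bricciA (A B C : ℝ) : ℝ :=
  -((2 / 3) * (-A ^ 2 * (2 * A + B + C) + A * (B - C) ^ 2))

/-- Right-hand side of the backward normalized Ricci flow ODE (⋆⋆) for `B`. -/
noncomputable def bricciB (A B C : ℝ) : ℝ :=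
  -((2 / 3) * (-B ^ 2 * (2 * B + A - C) + B * (A + C) ^ 2))

/-- Right-hand side of the backward normalized Ricci flow ODE (⋆⋆) for `C`. -/
noncomputable def bricciC (A B C : ℝ) : ℝ :=
  -((2 / 3) * (-C ^ 2 * (2 * C + A - B) + C * (A + B) ^ 2))

/-- `(A, B, C)` is a positive solution of the backward normalized Ricci flow ODE system (⋆⋆)
on the set `I`. -/
def IsBackwardRicciSolOn (A B C : ℝ → ℝ) (I : Set ℝ) : Prop :=
  ∀ t ∈ I, 0 < A t ∧ 0 < B t ∧ 0 < C t ∧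
    HasDerivAt A (bricciA (A t) (B t) (C t)) t ∧
    HasDerivAt B (bricciB (A t) (B t) (C t)) t ∧
    HasDerivAt C (bricciC (A t) (B t) (C t)) t

/-!
The quotient rule gives `A² · (B/A)' = B'A - BA'`, and along (⋆⋆) this Wronskian factors as
`2AB(A + B)(B - C - A)`. Exchanging `B` and `C` is a symmetry of (⋆⋆), so the equation for
`C/A` is the one for `B/A` with the roles of `b` and `c` exchanged.
-/

theorem bricciA_swap (A B C : ℝ) : bricciA A C B = bricciA A B C := by
  unfold bricciA
  ring

theorem bricciB_mul_sub_mul_bricciA (A B C : ℝ) :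
    bricciB A B C * A - B * bricciA A B C = 2 * A * B * (A + B) * (B - C - A) := by
  unfold bricciA bricciB
  ring

namespace IsBackwardRicciSolOn

variable {A B C : ℝ → ℝ} {I : Set ℝ}

theorem swap (h : IsBackwardRicciSolOn A B C I) : IsBackwardRicciSolOn A C B I := by
  intro t ht
  obtain ⟨hA, hB, hC, hA', hB', hC'⟩ := h t ht
  rw [bricciA_swap]
  -- `bricciB A C B` and `bricciC A B C` are the same term, and vice versa.
  exact ⟨hA, hC, hB, hA', hC', hB'⟩

theorem hasDerivAt_div (h : IsBackwardRicciSolOn A B C I) {t : ℝ} (ht : t ∈ I) :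
    HasDerivAt (fun s => B s / A s)
      (2 * A t ^ 2 * (B t / A t) * (1 + B t / A t) * (B t / A t - C t / A t - 1)) t := by
  obtain ⟨hA, -, -, hA', hB', -⟩ := h t ht
  refine (hB'.div hA' hA.ne').congr_deriv ?_
  rw [bricciB_mul_sub_mul_bricciA]
  field_simp

end IsBackwardRicciSolOn

/-- Projectivization of the backward normalized Ricci flow (⋆⋆): the ratios `b = B/A` and
`c = C/A` satisfy `db/dt = 2A²b(1+b)(b-c-1)` and `dc/dt = -2A²c(1+c)(b-c+1)`. -/
theorem backward_ricci_ratio_ode (A B C : ℝ → ℝ) (I : Set ℝ)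
    (hsol : IsBackwardRicciSolOn A B C I) :
    ∀ t ∈ I,
      HasDerivAt (fun s => B s / A s)
        (2 * (A t) ^ 2 * (B t / A t) * (1 + B t / A t) * (B t / A t - C t / A t - 1)) t ∧
      HasDerivAt (fun s => C s / A s)
        (-(2 * (A t) ^ 2) * (C t / A t) * (1 + C t / A t) * (B t / A t - C t / A t + 1)) t := by
  intro t ht
  refine ⟨hsol.hasDerivAt_div ht, ?_⟩
  convert hsol.swap.hasDerivAt_div ht using 1
  ring
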